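/- Let (e_n) be a uniformly quasi-greedy basic sequence in a Banach lattice, with uniform quasi-greedy constant C_qg^∨. Then for any distinct indices n_1, …, n_m and any real numbers a_1, …, a_m, ‖⋁_{k=1}^m |Σ_{i=1}^k a_i e_{n_i}|‖ ≤ 2 (max_i |a_i|) C_qg^∨ ‖Σ_{i=1}^m e_{n_i}‖. -/

import Mathlib

open Filter Topology MeasureTheory

section Core

variable {X : Type*} [NormedAddCommGroup X] [Lattice X] [HasSolidNorm X] [IsOrderedAddMonoid X] [NormedSpace ℝ X]

/-- The closed linear span of a sequence. -/
noncomputable def closedSpan (e : ℕ → X) : Submodule ℝ X :=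
  (Submodule.span ℝ (Set.range e)).topologicalClosure

/-- `e` is a basic sequence (a Schauder basis of its closed linear span), with coefficient
functionals `x ↦ c x ·` (the biorthogonal functionals applied to `x`). -/
def IsBasicSeq (e : ℕ → X) (c : X → ℕ → ℝ) : Prop :=
  (∀ n, e n ≠ 0) ∧
  ∀ x ∈ closedSpan e,
    Tendsto (fun m => ∑ k ∈ Finset.range m, c x k • e k) atTop (𝓝 x) ∧
    ∀ a : ℕ → ℝ, Tendsto (fun m => ∑ k ∈ Finset.range m, a k • e k) atTop (𝓝 x) → a = c x

def SemiNormalized (e : ℕ → X) : Prop :=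
  ∃ b B : ℝ, 0 < b ∧ ∀ n, b ≤ ‖e n‖ ∧ ‖e n‖ ≤ B

/-- `π` is a greedy ordering of `x` (with respect to coefficients `c`). -/
def IsGreedyOrdering (c : X → ℕ → ℝ) (x : X) (π : ℕ → ℕ) : Prop :=
  Function.Injective π ∧ (∀ n, c x n ≠ 0 → n ∈ Set.range π) ∧
    ∀ j k, j ≤ k → |c x (π k)| ≤ |c x (π j)|

/-- The natural greedy ordering: ties among coefficient moduli are broken by index. -/
def IsNaturalGreedyOrdering (c : X → ℕ → ℝ) (x : X) (ρ : ℕ → ℕ) : Prop :=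
  IsGreedyOrdering c x ρ ∧ ∀ j k, j < k → |c x (ρ j)| = |c x (ρ k)| → ρ j < ρ k

/-- `G_{π,m}(x)`, the `m`-th greedy sum of `x` along the ordering `π`. -/
noncomputable def greedySum (e : ℕ → X) (c : X → ℕ → ℝ) (π : ℕ → ℕ) (x : X) (m : ℕ) : X :=
  ∑ n ∈ Finset.range m, c x (π n) • e (π n)

/-- `⋁_{n=1}^{m+1} |G_{π,n}(x)|`. -/
noncomputable def greedyMax (e : ℕ → X) (c : X → ℕ → ℝ) (π : ℕ → ℕ) (x : X) (m : ℕ) : X :=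
  partialSups (fun n => |greedySum e c π x (n + 1)|) m

/-- Relatively uniform convergence. -/
def UConv (y : ℕ → X) (x : X) : Prop :=
  ∃ u : X, 0 ≤ u ∧ ∀ ε : ℝ, 0 < ε → ∃ N, ∀ n ≥ N, |y n - x| ≤ ε • u

/-- Order convergence (with respect to a net, encoded by a downward directed set
with infimum `0`). -/
def OConv (y : ℕ → X) (x : X) : Prop :=
  ∃ D : Set X, D.Nonempty ∧ DirectedOn (· ≥ ·) D ∧ IsGLB D 0 ∧
    ∀ d ∈ D, ∃ N, ∀ n ≥ N, |y n - x| ≤ d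

end Core


section AuxLemmas
variable {X : Type*} [NormedAddCommGroup X] [Lattice X] [HasSolidNorm X] [IsOrderedAddMonoid X]

lemma nnle_norm {x y : X} (hx : 0 ≤ x) (hxy : x ≤ y) : ‖x‖ ≤ ‖y‖ :=
  norm_le_norm_of_abs_le_abs (by rwa [abs_of_nonneg hx, abs_of_nonneg (hx.trans hxy)])

lemma abs_finset_sum_le {ι : Type*} (s : Finset ι) (f : ι → X) :
    |∑ i ∈ s, f i| ≤ ∑ i ∈ s, |f i| := by
  induction s using Finset.cons_induction with
  | empty => simp
  | cons a s ha ih =>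
    rw [Finset.sum_cons, Finset.sum_cons]
    exact (abs_add_le _ _).trans (add_le_add_right ih _)

lemma norm_partialSups_sub_le (f g : ℕ → X) (m : ℕ) :
    ‖partialSups f m - partialSups g m‖ ≤ ∑ k ∈ Finset.range (m + 1), ‖f k - g k‖ := by
  induction m with
  | zero => simp
  | succ m ih =>
    rw [show m + 1 = Order.succ m from rfl, partialSups_succ, partialSups_succ, Finset.sum_range_succ]
    exact (norm_sup_sub_sup_le_add_norm _ _ _ _).trans (add_le_add ih le_rfl)

lemma partialSups_abs_nonneg (f : ℕ → X) (m : ℕ) : 0 ≤ partialSups (fun k => |f k|) m :=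
  (abs_nonneg (f 0)).trans (le_partialSups_of_le (fun k => |f k|) (Nat.zero_le m))

lemma finset_eq_range_of_downward_closed (I : Finset ℕ)
    (h : ∀ l ∈ I, ∀ l', l' ≤ l → l' ∈ I) : I = Finset.range I.card := by
  have hsub : I ⊆ Finset.range I.card := by
    intro l hl
    rw [Finset.mem_range]
    have hsub2 : Finset.Iic l ⊆ I := fun l' hl' => h l hl l' (Finset.mem_Iic.1 hl')
    have := Finset.card_le_card hsub2
    simpa [Nat.card_Iic] using this
  exact Finset.eq_of_subset_of_card_le hsub (by simp)

end AuxLemmas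

lemma greedySum_of_sep {X : Type*} [NormedAddCommGroup X] [Lattice X] [HasSolidNorm X] [IsOrderedAddMonoid X] [NormedSpace ℝ X]
    (e : ℕ → X) (c : X → ℕ → ℝ) (x : X) (π : ℕ → ℕ)
    (hπ : IsGreedyOrdering c x π) (S : Finset ℕ)
    (hS0 : ∀ q ∈ S, c x q ≠ 0)
    (hsep : ∀ q ∈ S, ∀ p, c x p ≠ 0 → p ∉ S → |c x p| < |c x q|) :
    greedySum e c π x S.card = ∑ q ∈ S, c x q • e q := by
  classical
  obtain ⟨hinjπ, hsupp, hmono⟩ := hπ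
  set I : Finset ℕ := S.preimage π (hinjπ.injOn) with hI
  have hmemI : ∀ l, l ∈ I ↔ π l ∈ S := fun l => Finset.mem_preimage
  have hdc : ∀ l ∈ I, ∀ l', l' ≤ l → l' ∈ I := by
    intro l hl l' hl'
    rw [hmemI] at hl ⊢
    have h1 : |c x (π l)| ≤ |c x (π l')| := hmono l' l hl'
    have h2 : c x (π l') ≠ 0 := by
      intro h0
      rw [h0, abs_zero] at h1
      exact hS0 _ hl (abs_eq_zero.1 (le_antisymm h1 (abs_nonneg _)))
    by_contra hns
    exact absurd (hsep _ hl _ h2 hns) (not_lt.2 h1)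
  have himg : I.image π = S := by
    apply Finset.Subset.antisymm
    · intro q hq
      obtain ⟨l, hl, rfl⟩ := Finset.mem_image.1 hq
      exact (hmemI l).1 hl
    · intro q hq
      obtain ⟨l, rfl⟩ := hsupp q (hS0 q hq)
      exact Finset.mem_image.2 ⟨l, (hmemI l).2 hq, rfl⟩
  have hcard : I.card = S.card := by
    rw [← himg, Finset.card_image_of_injective _ hinjπ]
  have hIr : I = Finset.range S.card := by
    rw [← hcard]; exact finset_eq_range_of_downward_closed I hdc
  rw [greedySum, ← hIr, ← himg, Finset.sum_image (fun a _ b _ h => hinjπ h)]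

set_option maxHeartbeats 2000000 in
lemma stmt7_L1 {X : Type*} [NormedAddCommGroup X] [Lattice X] [HasSolidNorm X] [IsOrderedAddMonoid X] [NormedSpace ℝ X] [PosSMulStrictMono ℝ X] [PosSMulReflectLT ℝ X]
    (e : ℕ → X) (c : X → ℕ → ℝ) (ρ : X → ℕ → ℕ)
    (hbasic : IsBasicSeq e c)
    (hρ : ∀ x ∈ closedSpan e, IsNaturalGreedyOrdering c x (ρ x))
    (C : ℝ) (hC1 : 1 ≤ C)
    (hC : ∀ x ∈ closedSpan e, ∀ m, ‖greedyMax e c (ρ x) x m‖ ≤ C * ‖x‖)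
    (B : ℝ) (hB1 : 1 ≤ B) (hBe : ∀ q, ‖e q‖ ≤ B)
    (m : ℕ) (n : ℕ → ℕ) (hinj : ∀ i j, i ≤ m → j ≤ m → n i = n j → i = j)
    (T : Finset ℕ) :
    ‖partialSups (fun k => |∑ i ∈ Finset.range (k + 1) ∩ T, e (n i)|) m‖ ≤
      C * ‖∑ i ∈ Finset.range (m + 1), e (n i)‖ := by
  classical
  obtain ⟨hnz, hbs⟩ := hbasic
  have hC0 : (0:ℝ) ≤ C := zero_le_one.trans hC1
  have hBpos : (0:ℝ) < B := lt_of_lt_of_le one_pos hB1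
  set M : ℝ := (m : ℝ) + 1 with hM
  have hMpos : (0:ℝ) < M := by positivity
  set u : X := ∑ i ∈ Finset.range (m + 1), e (n i) with hu
  refine le_of_forall_pos_le_add ?_
  intro ε hε
  set K : ℝ := (C + M) * (M * B) + 1 with hK
  have hKpos : 0 < K := by
    have h1 : 0 < (C + M) * (M * B) := mul_pos (by linarith) (mul_pos hMpos hBpos)
    linarith
  set δ : ℝ := min (ε / K) 1 with hδdef
  have hδpos : 0 < δ := lt_min (div_pos hε hKpos) one_pos
  have hδ1 : δ ≤ 1 := min_le_right _ _
  have hδK : δ * K ≤ ε := by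
    calc δ * K ≤ ε / K * K := mul_le_mul_of_nonneg_right (min_le_left _ _) hKpos.le
      _ = ε := div_mul_cancel₀ _ hKpos.ne'
  set v : ℕ → ℝ := fun i =>
    if i ∈ T then 1 + δ * (3 - (i:ℝ)/M)/4 else 1 + δ * (1 - (i:ℝ)/M)/4 with hv
  have hiM : ∀ i, i ≤ m → (i:ℝ)/M < 1 := by
    intro i hi
    rw [div_lt_one hMpos, hM]
    exact_mod_cast Nat.lt_succ_of_le hi
  have hiM0 : ∀ i : ℕ, (0:ℝ) ≤ (i:ℝ)/M := fun i => by positivity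
  have hv1 : ∀ i, i ≤ m → 1 < v i := by
    intro i hi
    have h1 := hiM i hi
    have h0 := hiM0 i
    rw [hv]; dsimp only
    split <;> nlinarith
  have hvle : ∀ i, i ≤ m → v i ≤ 1 + δ := by
    intro i hi
    have h1 := hiM i hi
    have h0 := hiM0 i
    rw [hv]; dsimp only
    split <;> nlinarith
  have hvd : ∀ i, i ≤ m → |v i - 1| ≤ δ := by
    intro i hi
    rw [abs_le]
    constructor
    · nlinarith [hv1 i hi]
    · nlinarith [hvle i hi]
  have hvorder : ∀ i j, i ≤ m → j ≤ m → i ∈ T → (j ∉ T ∨ (j ∈ T ∧ i < j)) → v j < v i := by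
    intro i j hi hj hiT hcase
    have h1i := hiM i hi
    have h0i := hiM0 i
    have h1j := hiM j hj
    have h0j := hiM0 j
    rcases hcase with hjT | ⟨hjT, hij⟩
    · rw [hv]; dsimp only
      rw [if_pos hiT, if_neg hjT]
      nlinarith
    · rw [hv]; dsimp only
      rw [if_pos hiT, if_pos hjT]
      have hd : (i:ℝ)/M < (j:ℝ)/M := by
        rw [div_lt_div_iff₀ hMpos hMpos]
        have : (i:ℝ) < (j:ℝ) := by exact_mod_cast hij
        nlinarith
      nlinarith
  -- the perturbed vector
  set x : X := ∑ i ∈ Finset.range (m + 1), v i • e (n i) with hxdef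
  have hxmem : x ∈ closedSpan e := by
    have hsp : x ∈ Submodule.span ℝ (Set.range e) := by
      rw [hxdef]
      exact Submodule.sum_mem _ fun i _ =>
        Submodule.smul_mem _ _ (Submodule.subset_span ⟨n i, rfl⟩)
    exact Submodule.le_topologicalClosure (Submodule.span ℝ (Set.range e)) hsp
  -- the coefficients of x
  set aδ : ℕ → ℝ := fun q => ∑ i ∈ Finset.range (m + 1), (if n i = q then v i else 0) with haδdef
  have haδn : ∀ i ∈ Finset.range (m + 1), aδ (n i) = v i := by
    intro i hi
    simp only [haδdef]
    rw [Finset.sum_eq_single i]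
    · rw [if_pos rfl]
    · intro j hj hne
      rw [if_neg]
      intro h
      exact hne (hinj j i (Nat.lt_succ_iff.1 (Finset.mem_range.1 hj))
        (Nat.lt_succ_iff.1 (Finset.mem_range.1 hi)) h)
    · intro h; exact absurd hi h
  have haδ0 : ∀ q, (∀ i ∈ Finset.range (m + 1), n i ≠ q) → aδ q = 0 := by
    intro q h
    simp only [haδdef]
    exact Finset.sum_eq_zero fun i hi => if_neg (h i hi)
  have hsmul : ∀ q, aδ q • e q =
      ∑ i ∈ Finset.range (m + 1), (if n i = q then v i • e q else 0) := by
    intro q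
    simp only [haδdef]
    rw [Finset.sum_smul]
    exact Finset.sum_congr rfl fun i _ => by split <;> simp
  have htends : Tendsto (fun Mn => ∑ q ∈ Finset.range Mn, aδ q • e q) atTop (𝓝 x) := by
    apply Tendsto.congr' _ (tendsto_const_nhds (x := x))
    filter_upwards [eventually_ge_atTop ((Finset.range (m + 1)).sup n + 1)] with Mn hMn
    have hni : ∀ i ∈ Finset.range (m + 1), n i ∈ Finset.range Mn := by
      intro i hi
      rw [Finset.mem_range]
      have h1 : n i ≤ (Finset.range (m + 1)).sup n := Finset.le_sup hi
      omega
    symm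
    calc ∑ q ∈ Finset.range Mn, aδ q • e q
        = ∑ q ∈ Finset.range Mn, ∑ i ∈ Finset.range (m + 1),
            (if n i = q then v i • e q else 0) :=
          Finset.sum_congr rfl fun q _ => hsmul q
      _ = ∑ i ∈ Finset.range (m + 1), ∑ q ∈ Finset.range Mn,
            (if n i = q then v i • e q else 0) := Finset.sum_comm
      _ = x := by
          rw [hxdef]
          refine Finset.sum_congr rfl fun i hi => ?_
          rw [Finset.sum_ite_eq (Finset.range Mn) (n i) (fun q => v i • e q),
            if_pos (hni i hi)]
  have hceq : aδ = c x := (hbs x hxmem).2 aδ htends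
  have hcx : ∀ i ∈ Finset.range (m + 1), c x (n i) = v i := by
    intro i hi; rw [← hceq]; exact haδn i hi
  have hcx0 : ∀ q, c x q ≠ 0 → ∃ j ∈ Finset.range (m + 1), n j = q := by
    intro q hq
    by_contra h
    push_neg at h
    exact hq (by rw [← hceq]; exact haδ0 q h)
  -- greedy sum identification
  have hgsid : ∀ k, k ≤ m →
      greedySum e c (ρ x) x ((Finset.range (k + 1) ∩ T).card) =
        ∑ i ∈ Finset.range (k + 1) ∩ T, v i • e (n i) := by
    intro k hk
    have hsubm : ∀ i ∈ Finset.range (k + 1) ∩ T, i ≤ m := by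
      intro i hi
      have h2 := (Finset.mem_inter.1 hi).1
      rw [Finset.mem_range] at h2; omega
    have hinjS : ∀ i ∈ Finset.range (k + 1) ∩ T, ∀ j ∈ Finset.range (k + 1) ∩ T,
        n i = n j → i = j :=
      fun i hi j hj h => hinj i j (hsubm i hi) (hsubm j hj) h
    have hmemr : ∀ i ∈ Finset.range (k + 1) ∩ T, i ∈ Finset.range (m + 1) :=
      fun i hi => Finset.mem_range.2 (Nat.lt_succ_of_le (hsubm i hi))
    have hcardim : ((Finset.range (k + 1) ∩ T).image n).card =
        (Finset.range (k + 1) ∩ T).card :=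
      Finset.card_image_of_injOn (fun i hi j hj h => hinjS i hi j hj h)
    have hres := greedySum_of_sep e c x (ρ x) (hρ x hxmem).1
      ((Finset.range (k + 1) ∩ T).image n) ?_ ?_
    · rw [hcardim] at hres
      rw [hres, Finset.sum_image hinjS]
      exact Finset.sum_congr rfl fun i hi => by rw [hcx i (hmemr i hi)]
    · intro q hq
      obtain ⟨i, hi, rfl⟩ := Finset.mem_image.1 hq
      rw [hcx i (hmemr i hi)]
      exact ne_of_gt (lt_trans one_pos (hv1 i (hsubm i hi)))
    · intro q hq p hp hpS
      obtain ⟨i, hi, rfl⟩ := Finset.mem_image.1 hq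
      obtain ⟨j, hj, rfl⟩ := hcx0 p hp
      have hjm : j ≤ m := Nat.lt_succ_iff.1 (Finset.mem_range.1 hj)
      have him : i ≤ m := hsubm i hi
      have hiT : i ∈ T := (Finset.mem_inter.1 hi).2
      have hik : i ≤ k := by
        have h2 := (Finset.mem_inter.1 hi).1
        rw [Finset.mem_range] at h2; omega
      rw [hcx i (hmemr i hi), hcx j hj]
      rw [abs_of_pos (lt_trans one_pos (hv1 i him)), abs_of_pos (lt_trans one_pos (hv1 j hjm))]
      apply hvorder i j him hjm hiT
      by_cases hjT : j ∈ T
      · right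
        refine ⟨hjT, ?_⟩
        by_contra hji
        push_neg at hji
        exact hpS (Finset.mem_image.2 ⟨j,
          Finset.mem_inter.2 ⟨Finset.mem_range.2 (by omega), hjT⟩, rfl⟩)
      · left; exact hjT
  have hWle : ∀ k, k ≤ m →
      |∑ i ∈ Finset.range (k + 1) ∩ T, v i • e (n i)| ≤ greedyMax e c (ρ x) x m := by
    intro k hk
    rw [← hgsid k hk]
    rcases Nat.eq_zero_or_pos ((Finset.range (k + 1) ∩ T).card) with h0 | hposc
    · rw [h0]
      have hz : greedySum e c (ρ x) x 0 = 0 := by simp [greedySum]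
      rw [hz, abs_zero]
      exact partialSups_abs_nonneg (fun l => greedySum e c (ρ x) x (l + 1)) m
    · obtain ⟨r, hr⟩ : ∃ r, (Finset.range (k + 1) ∩ T).card = r + 1 :=
        ⟨(Finset.range (k + 1) ∩ T).card - 1, by omega⟩
      have hrm : r ≤ m := by
        have h2 : (Finset.range (k + 1) ∩ T).card ≤ k + 1 :=
          le_trans (Finset.card_le_card Finset.inter_subset_left) (by simp)
        omega
      rw [hr]
      exact le_partialSups_of_le (fun l => |greedySum e c (ρ x) x (l + 1)|) hrm
  have hmax : partialSups (fun k => |∑ i ∈ Finset.range (k + 1) ∩ T, v i • e (n i)|) m ≤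
      greedyMax e c (ρ x) x m :=
    partialSups_le _ m _ (fun k hk => hWle k hk)
  have h5 : ‖partialSups (fun k => |∑ i ∈ Finset.range (k + 1) ∩ T, v i • e (n i)|) m‖ ≤
      C * ‖x‖ :=
    le_trans (nnle_norm (partialSups_abs_nonneg _ m) hmax) (hC x hxmem m)
  -- error estimates
  have hxu : ‖x - u‖ ≤ δ * (M * B) := by
    rw [hxdef, hu, ← Finset.sum_sub_distrib]
    have h1 : ∀ i ∈ Finset.range (m + 1), ‖v i • e (n i) - e (n i)‖ ≤ δ * B := by
      intro i hi
      have heq : v i • e (n i) - e (n i) = (v i - 1) • e (n i) := by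
        rw [sub_smul, one_smul]
      rw [heq, norm_smul, Real.norm_eq_abs]
      exact mul_le_mul (hvd i (Nat.lt_succ_iff.1 (Finset.mem_range.1 hi))) (hBe _)
        (norm_nonneg _) hδpos.le
    refine le_trans (norm_sum_le _ _) ?_
    refine le_trans (Finset.sum_le_sum h1) ?_
    rw [Finset.sum_const, Finset.card_range, nsmul_eq_mul]
    apply le_of_eq
    rw [hM]; push_cast; ring
  have hnormx : ‖x‖ ≤ ‖u‖ + δ * (M * B) := by
    have h2 := norm_sub_norm_le x u
    linarith
  have hFW : ∀ k ∈ Finset.range (m + 1),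
      ‖(fun k => |∑ i ∈ Finset.range (k + 1) ∩ T, e (n i)|) k -
        (fun k => |∑ i ∈ Finset.range (k + 1) ∩ T, v i • e (n i)|) k‖ ≤ δ * (M * B) := by
    intro k hk
    dsimp only
    refine le_trans (norm_abs_sub_abs _ _) ?_
    rw [← Finset.sum_sub_distrib]
    have h1 : ∀ i ∈ Finset.range (k + 1) ∩ T, ‖e (n i) - v i • e (n i)‖ ≤ δ * B := by
      intro i hi
      have him : i ≤ m := by
        have h2 := (Finset.mem_inter.1 hi).1
        rw [Finset.mem_range] at h2
        rw [Finset.mem_range] at hk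
        omega
      have heq : e (n i) - v i • e (n i) = (1 - v i) • e (n i) := by
        rw [sub_smul, one_smul]
      rw [heq, norm_smul, Real.norm_eq_abs, abs_sub_comm]
      exact mul_le_mul (hvd i him) (hBe _) (norm_nonneg _) hδpos.le
    refine le_trans (norm_sum_le _ _) ?_
    refine le_trans (Finset.sum_le_sum h1) ?_
    rw [Finset.sum_const, nsmul_eq_mul]
    have hcard : (Finset.range (k + 1) ∩ T).card ≤ m + 1 := by
      refine le_trans (Finset.card_le_card Finset.inter_subset_left) ?_
      rw [Finset.card_range]
      rw [Finset.mem_range] at hk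
      omega
    calc ((Finset.range (k + 1) ∩ T).card : ℝ) * (δ * B) ≤ M * (δ * B) := by
          apply mul_le_mul_of_nonneg_right _ (by positivity)
          rw [hM]; exact_mod_cast hcard
      _ = δ * (M * B) := by ring
  have hdiff : ‖partialSups (fun k => |∑ i ∈ Finset.range (k + 1) ∩ T, e (n i)|) m -
      partialSups (fun k => |∑ i ∈ Finset.range (k + 1) ∩ T, v i • e (n i)|) m‖ ≤
      M * (δ * (M * B)) := by
    refine le_trans (norm_partialSups_sub_le _ _ m) ?_
    refine le_trans (Finset.sum_le_sum hFW) ?_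
    rw [Finset.sum_const, Finset.card_range, nsmul_eq_mul]
    apply le_of_eq
    rw [hM]; push_cast; ring
  have h6 := norm_sub_norm_le
    (partialSups (fun k => |∑ i ∈ Finset.range (k + 1) ∩ T, e (n i)|) m)
    (partialSups (fun k => |∑ i ∈ Finset.range (k + 1) ∩ T, v i • e (n i)|) m)
  have h7 : C * ‖x‖ ≤ C * ‖u‖ + C * (δ * (M * B)) := by
    have h := mul_le_mul_of_nonneg_left hnormx hC0
    rw [mul_add] at h
    exact h
  have h8 : C * (δ * (M * B)) + M * (δ * (M * B)) = δ * ((C + M) * (M * B)) := by ring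
  have h9 : δ * ((C + M) * (M * B)) ≤ δ * K := by
    apply mul_le_mul_of_nonneg_left _ hδpos.le
    rw [hK]; linarith
  linarith


set_option maxHeartbeats 2000000 in
/-- Maximal-function bound for arbitrary coefficients dominated by their
maximum, for a uniformly quasi-greedy basic sequence.  Indices `n 0, …, n m` play the role
of `n_1, …, n_{m+1}`. -/
theorem stmt7 {X : Type*} [NormedAddCommGroup X] [Lattice X] [HasSolidNorm X] [IsOrderedAddMonoid X] [NormedSpace ℝ X] [PosSMulStrictMono ℝ X] [PosSMulReflectLT ℝ X]
    [CompleteSpace X]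
    (e : ℕ → X) (c : X → ℕ → ℝ) (ρ : X → ℕ → ℕ)
    (hbasic : IsBasicSeq e c) (hsn : SemiNormalized e)
    (hρ : ∀ x ∈ closedSpan e, IsNaturalGreedyOrdering c x (ρ x))
    (C : ℝ) (hC1 : 1 ≤ C)
    -- (e_n) is uniformly quasi-greedy with constant C
    (hC : ∀ x ∈ closedSpan e, ∀ m, ‖greedyMax e c (ρ x) x m‖ ≤ C * ‖x‖)
    (m : ℕ) (n : ℕ → ℕ) (hinj : ∀ i j, i ≤ m → j ≤ m → n i = n j → i = j)
    (a : ℕ → ℝ) :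
    ‖partialSups (fun k => |∑ i ∈ Finset.range (k + 1), a i • e (n i)|) m‖ ≤
      2 * ((Finset.range (m + 1)).sup' Finset.nonempty_range_add_one fun i => |a i|) * C *
        ‖∑ i ∈ Finset.range (m + 1), e (n i)‖ := by
  classical
  obtain ⟨b0, B0, hb0, hB0⟩ := hsn
  have hBe : ∀ q, ‖e q‖ ≤ max B0 1 := fun q => le_trans (hB0 q).2 (le_max_left _ _)
  have L1 := fun T => stmt7_L1 e c ρ hbasic hρ C hC1 hC (max B0 1) (le_max_right _ _)
    hBe m n hinj T
  have hC0 : (0:ℝ) ≤ C := zero_le_one.trans hC1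
  set A : ℝ := (Finset.range (m + 1)).sup' Finset.nonempty_range_add_one (fun i => |a i|) with hA
  have hAi : ∀ i, i ≤ m → |a i| ≤ A := fun i hi =>
    Finset.le_sup' (f := fun i => |a i|) (Finset.mem_range.2 (Nat.lt_succ_of_le hi))
  have hA0 : 0 ≤ A := le_trans (abs_nonneg (a 0)) (hAi 0 (Nat.zero_le m))
  rcases eq_or_lt_of_le hA0 with hAz | hApos
  · -- A = 0 : all coefficients vanish
    have ha0 : ∀ i, i ≤ m → a i = 0 := by
      intro i hi
      have h1 : |a i| ≤ 0 := by rw [hAz]; exact hAi i hi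
      exact abs_eq_zero.1 (le_antisymm h1 (abs_nonneg _))
    have hz : ∀ k, k ≤ m →
        (fun k => |∑ i ∈ Finset.range (k + 1), a i • e (n i)|) k ≤ 0 := by
      intro k hk
      dsimp only
      have hzero : ∑ i ∈ Finset.range (k + 1), a i • e (n i) = 0 :=
        Finset.sum_eq_zero fun i hi => by
          rw [ha0 i (by rw [Finset.mem_range] at hi; omega), zero_smul]
      rw [hzero, abs_zero]
    have hps : partialSups (fun k => |∑ i ∈ Finset.range (k + 1), a i • e (n i)|) m = 0 :=
      le_antisymm (partialSups_le _ m 0 hz) (partialSups_abs_nonneg _ m)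
    rw [hps, norm_zero, ← hAz]
    simp
  · -- A > 0
    have LM : ∀ bc : ℕ → ℝ, (∀ i, i ≤ m → 0 ≤ bc i ∧ bc i ≤ A) →
        ‖partialSups (fun k => |∑ i ∈ Finset.range (k + 1), bc i • e (n i)|) m‖ ≤
          A * (C * ‖∑ i ∈ Finset.range (m + 1), e (n i)‖) := by
      intro bc hbc
      set p : ℕ → ℝ := fun i => bc i / A with hp
      have hp01 : ∀ i, i ≤ m → 0 ≤ p i ∧ p i ≤ 1 := by
        intro i hi
        constructor
        · exact div_nonneg (hbc i hi).1 hA0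
        · rw [hp]; dsimp only
          rw [div_le_one hApos]
          exact (hbc i hi).2
      set w : Finset ℕ → ℝ :=
        fun S => (∏ i ∈ S, p i) * ∏ i ∈ Finset.range (m + 1) \ S, (1 - p i) with hw
      have hw0 : ∀ S ∈ (Finset.range (m + 1)).powerset, 0 ≤ w S := by
        intro S hS
        rw [Finset.mem_powerset] at hS
        refine mul_nonneg (Finset.prod_nonneg fun i hi => (hp01 i ?_).1)
          (Finset.prod_nonneg fun i hi => ?_)
        · exact Nat.lt_succ_iff.1 (Finset.mem_range.1 (hS hi))
        · have h2 := (hp01 i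
            (Nat.lt_succ_iff.1 (Finset.mem_range.1 (Finset.mem_sdiff.1 hi).1))).2
          linarith
      have hwsum : ∑ S ∈ (Finset.range (m + 1)).powerset, w S = 1 :=
        (Finset.prod_add p (fun i => 1 - p i) (Finset.range (m + 1))).symm.trans
          (Finset.prod_eq_one fun i _ => by ring)
      have hmarg : ∀ j, j ≤ m →
          ∑ S ∈ (Finset.range (m + 1)).powerset, (if j ∈ S then w S else 0) = p j := by
        intro j hj
        have hjr : j ∈ Finset.range (m + 1) := Finset.mem_range.2 (Nat.lt_succ_of_le hj)
        have h := Finset.prod_add p (fun i => if i = j then 0 else 1 - p i)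
          (Finset.range (m + 1))
        have hL : ∏ i ∈ Finset.range (m + 1), (p i + if i = j then 0 else 1 - p i) = p j := by
          rw [Finset.prod_congr rfl (g := fun i => if i = j then p i else 1)
            (fun i _ => by by_cases hij : i = j <;> simp [hij] <;> ring)]
          rw [Finset.prod_ite_eq' (Finset.range (m + 1)) j (fun i => p i), if_pos hjr]
        have hR : ∀ S ∈ (Finset.range (m + 1)).powerset,
            (∏ i ∈ S, p i) * (∏ i ∈ Finset.range (m + 1) \ S,
              (if i = j then 0 else 1 - p i)) = (if j ∈ S then w S else 0) := by
          intro S hS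
          by_cases hjS : j ∈ S
          · rw [if_pos hjS, hw]
            dsimp only
            congr 1
            refine Finset.prod_congr rfl fun i hi => ?_
            rw [if_neg]
            intro hij
            exact (Finset.mem_sdiff.1 hi).2 (hij ▸ hjS)
          · rw [if_neg hjS]
            have hz : (∏ i ∈ Finset.range (m + 1) \ S, (if i = j then 0 else 1 - p i)) = 0 :=
              Finset.prod_eq_zero (Finset.mem_sdiff.2 ⟨hjr, hjS⟩) (if_pos rfl)
            rw [hz, mul_zero]
        rw [← hL, h]
        exact Finset.sum_congr rfl fun S hS => (hR S hS).symm
      have hid : ∀ k, k ≤ m →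
          A • ∑ S ∈ (Finset.range (m + 1)).powerset,
            w S • (∑ i ∈ Finset.range (k + 1) ∩ S, e (n i)) =
          ∑ i ∈ Finset.range (k + 1), bc i • e (n i) := by
        intro k hk
        have hterm : ∀ S ∈ (Finset.range (m + 1)).powerset,
            A • (w S • ∑ i ∈ Finset.range (k + 1) ∩ S, e (n i)) =
            ∑ i ∈ Finset.range (k + 1), (if i ∈ S then (A * w S) • e (n i) else 0) := by
          intro S hS
          rw [smul_smul, Finset.smul_sum]
          exact (Finset.sum_ite_mem (Finset.range (k + 1)) S
            fun i => (A * w S) • e (n i)).symm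
        calc A • ∑ S ∈ (Finset.range (m + 1)).powerset,
              w S • (∑ i ∈ Finset.range (k + 1) ∩ S, e (n i))
            = ∑ S ∈ (Finset.range (m + 1)).powerset,
                ∑ i ∈ Finset.range (k + 1), (if i ∈ S then (A * w S) • e (n i) else 0) := by
              rw [Finset.smul_sum]
              exact Finset.sum_congr rfl hterm
          _ = ∑ i ∈ Finset.range (k + 1), ∑ S ∈ (Finset.range (m + 1)).powerset,
                (if i ∈ S then (A * w S) • e (n i) else 0) := Finset.sum_comm
          _ = ∑ i ∈ Finset.range (k + 1), bc i • e (n i) := by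
              refine Finset.sum_congr rfl fun i hi => ?_
              have him : i ≤ m := by rw [Finset.mem_range] at hi; omega
              have h1 : ∀ S ∈ (Finset.range (m + 1)).powerset,
                  (if i ∈ S then (A * w S) • e (n i) else 0) =
                  (A * (if i ∈ S then w S else 0)) • e (n i) := by
                intro S hS
                split <;> simp
              rw [Finset.sum_congr rfl h1, ← Finset.sum_smul]
              congr 1
              rw [show (∑ S ∈ (Finset.range (m + 1)).powerset,
                  A * (if i ∈ S then w S else 0)) =
                  A * ∑ S ∈ (Finset.range (m + 1)).powerset,
                    (if i ∈ S then w S else 0) from (Finset.mul_sum _ _ _).symm,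
                hmarg i him, hp]
              dsimp only
              rw [mul_comm, div_mul_cancel₀ _ (ne_of_gt hApos)]
      have hMSb : ∀ S : Finset ℕ,
          ‖partialSups (fun k => |∑ i ∈ Finset.range (k + 1) ∩ S, e (n i)|) m‖ ≤
            C * ‖∑ i ∈ Finset.range (m + 1), e (n i)‖ := fun S => L1 S
      have hptw : ∀ k, k ≤ m →
          (fun k => |∑ i ∈ Finset.range (k + 1), bc i • e (n i)|) k ≤
          A • ∑ S ∈ (Finset.range (m + 1)).powerset,
            w S • partialSups (fun k' => |∑ i ∈ Finset.range (k' + 1) ∩ S, e (n i)|) m := by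
        intro k hk
        dsimp only
        rw [← hid k hk, abs_le']
        constructor
        · refine smul_le_smul_of_nonneg_left (Finset.sum_le_sum fun S hS => ?_) hA0
          refine smul_le_smul_of_nonneg_left ?_ (hw0 S hS)
          exact le_trans (le_abs_self _)
            (le_partialSups_of_le (fun k' => |∑ i ∈ Finset.range (k' + 1) ∩ S, e (n i)|) hk)
        · rw [← smul_neg]
          refine smul_le_smul_of_nonneg_left ?_ hA0
          rw [← Finset.sum_neg_distrib]
          refine Finset.sum_le_sum fun S hS => ?_
          rw [← smul_neg]
          refine smul_le_smul_of_nonneg_left ?_ (hw0 S hS)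
          exact le_trans (neg_le_abs _)
            (le_partialSups_of_le (fun k' => |∑ i ∈ Finset.range (k' + 1) ∩ S, e (n i)|) hk)
      have hps : partialSups (fun k => |∑ i ∈ Finset.range (k + 1), bc i • e (n i)|) m ≤
          A • ∑ S ∈ (Finset.range (m + 1)).powerset,
            w S • partialSups (fun k' => |∑ i ∈ Finset.range (k' + 1) ∩ S, e (n i)|) m :=
        partialSups_le _ m _ hptw
      refine le_trans (nnle_norm (partialSups_abs_nonneg _ m) hps) ?_
      rw [norm_smul, Real.norm_eq_abs, abs_of_nonneg hA0]
      refine mul_le_mul_of_nonneg_left ?_ hA0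
      refine le_trans (norm_sum_le _ _) ?_
      have hterm2 : ∀ S ∈ (Finset.range (m + 1)).powerset,
          ‖w S • partialSups (fun k' => |∑ i ∈ Finset.range (k' + 1) ∩ S, e (n i)|) m‖ ≤
          w S * (C * ‖∑ i ∈ Finset.range (m + 1), e (n i)‖) := by
        intro S hS
        rw [norm_smul, Real.norm_eq_abs, abs_of_nonneg (hw0 S hS)]
        exact mul_le_mul_of_nonneg_left (hMSb S) (hw0 S hS)
      refine le_trans (Finset.sum_le_sum hterm2) ?_
      rw [← Finset.sum_mul, hwsum, one_mul]
    -- split into positive and negative parts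
    set bp : ℕ → ℝ := fun i => max (a i) 0 with hbp
    set bm : ℕ → ℝ := fun i => max (-(a i)) 0 with hbm
    have h1 := LM bp (fun i hi => ⟨le_max_right _ _,
      max_le (le_trans (le_abs_self _) (hAi i hi)) hA0⟩)
    have h2 := LM bm (fun i hi => ⟨le_max_right _ _,
      max_le (le_trans (neg_le_abs _) (hAi i hi)) hA0⟩)
    have hsplit : ∀ k, k ≤ m →
        (fun k => |∑ i ∈ Finset.range (k + 1), a i • e (n i)|) k ≤
        partialSups (fun k => |∑ i ∈ Finset.range (k + 1), bp i • e (n i)|) m +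
        partialSups (fun k => |∑ i ∈ Finset.range (k + 1), bm i • e (n i)|) m := by
      intro k hk
      dsimp only
      have hdecomp : ∑ i ∈ Finset.range (k + 1), a i • e (n i) =
          (∑ i ∈ Finset.range (k + 1), bp i • e (n i)) -
          (∑ i ∈ Finset.range (k + 1), bm i • e (n i)) := by
        rw [← Finset.sum_sub_distrib]
        refine Finset.sum_congr rfl fun i hi => ?_
        rw [← sub_smul, hbp, hbm]
        dsimp only
        rw [max_zero_sub_max_neg_zero_eq_self]
      rw [hdecomp]
      have habs : |(∑ i ∈ Finset.range (k + 1), bp i • e (n i)) -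
          (∑ i ∈ Finset.range (k + 1), bm i • e (n i))| ≤
          |∑ i ∈ Finset.range (k + 1), bp i • e (n i)| +
          |∑ i ∈ Finset.range (k + 1), bm i • e (n i)| := by
        rw [sub_eq_add_neg]
        exact le_trans (abs_add_le _ _) (by rw [abs_neg])
      refine le_trans habs (add_le_add ?_ ?_)
      · exact le_partialSups_of_le (fun k => |∑ i ∈ Finset.range (k + 1), bp i • e (n i)|) hk
      · exact le_partialSups_of_le (fun k => |∑ i ∈ Finset.range (k + 1), bm i • e (n i)|) hk
    have hfinal : partialSups (fun k => |∑ i ∈ Finset.range (k + 1), a i • e (n i)|) m ≤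
        partialSups (fun k => |∑ i ∈ Finset.range (k + 1), bp i • e (n i)|) m +
        partialSups (fun k => |∑ i ∈ Finset.range (k + 1), bm i • e (n i)|) m :=
      partialSups_le _ m _ hsplit
    refine le_trans (nnle_norm (partialSups_abs_nonneg _ m) hfinal) ?_
    refine le_trans (norm_add_le _ _) ?_
    have hring : 2 * A * C * ‖∑ i ∈ Finset.range (m + 1), e (n i)‖ =
        A * (C * ‖∑ i ∈ Finset.range (m + 1), e (n i)‖) +
        A * (C * ‖∑ i ∈ Finset.range (m + 1), e (n i)‖) := by ring
    rw [hring]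
    exact add_le_add h1 h2
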